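/- arXiv:math/0312263 — 2 statements merged into one kernel-verified Lean document; each statement's English description precedes it below -/
import Mathlib

section
/- If P is a complex of projective modules and C is a bounded exact complex of modules, then the Hom-complex Hom(P, C) is exact. -/
/-!
Let `L` vanish above degree `b`. A primitive of an `n`-cocycle `z : Cochain K L n` is built one
source degree at a time, descending from `b - n`, above which `z` is zero. If `δ α` agrees with
`z` in all degrees `> p`, then `w = z - δ α` is a cocycle vanishing in degree `p + 1`, so its
component at `p` lands in the cycles of `L`; exactness of `L` and projectivity of `K^p` lift it
to `h : K^p ⟶ L^(p+n-1)` with `h ≫ d = w_p`. Adding `h` leaves `α` unchanged in higher degrees,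
so the corrected cochains converge degreewise to a primitive of `z`.
-/

open CategoryTheory CategoryTheory.Limits CochainComplex.HomComplex

variable {A : Type} [Ring A]

/-- Cochain complexes of A-modules. -/
abbrev Cplx (A : Type) [Ring A] := CochainComplex (ModuleCat A) ℤ

/-- A complex is acyclic (exact) if it is exact at every degree. -/
def Acyclic (C : Cplx A) : Prop := ∀ n : ℤ, C.ExactAt n

/-- A module viewed as a complex concentrated in degree 0. -/
noncomputable def sgl (Q : ModuleCat A) : Cplx A :=
  (HomologicalComplex.single (ModuleCat A) (ComplexShape.up ℤ) 0).obj Q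

/-- Acyclicity of the total Hom-complex Hom(P, Q): every n-cocycle is a coboundary. -/
def HomAcyclic (P Q : Cplx A) : Prop :=
  ∀ (n : ℤ) (z : Cocycle P Q n), ∃ y : Cochain P Q (n - 1), δ (n - 1) n y = z.1

/-- A complex is bounded if its terms vanish outside a finite range. -/
def Bdd (C : Cplx A) : Prop := ∃ a b : ℤ, ∀ n : ℤ, (n < a ∨ b < n) → IsZero (C.X n)

/-- A Gorenstein projective module: a kernel Ker(E^1 → E^2) of a totally acyclic
complex of projectives. -/
def IsGorensteinProjective (G : ModuleCat A) : Prop :=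
  ∃ E : Cplx A, (∀ n : ℤ, Projective (E.X n)) ∧ Acyclic E ∧
    (∀ Q : ModuleCat A, Projective Q → HomAcyclic E (sgl Q)) ∧
    Nonempty (G ≅ kernel (E.d 1 2))

namespace CochainComplex.HomComplex

namespace Cochain

variable {C : Type*} [Category* C] [Preadditive C] {K L : CochainComplex C ℤ}

def EqFrom {n : ℤ} (α β : Cochain K L n) (p₀ : ℤ) : Prop :=
  ∀ (p q : ℤ) (hpq : p + n = q), p₀ ≤ p → α.v p q hpq = β.v p q hpq

namespace InductionDown

variable {d : ℤ} {X : ℕ → Set (Cochain K L d)} (φ : ∀ (k : ℕ), X k → X (k + 1)) (x₀ : X 0)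

def sequence : ∀ k, X k
  | 0 => x₀
  | k + 1 => φ k (sequence k)

lemma sequence_eqFrom {p₀ : ℤ} (hφ : ∀ (k : ℕ) (x : X k), (φ k x).val.EqFrom x.val (p₀ - k))
    (k₁ k₂ : ℕ) (h : k₁ ≤ k₂) :
    (sequence φ x₀ k₁).val.EqFrom (sequence φ x₀ k₂).val (p₀ - k₁) := by
  obtain ⟨k, rfl⟩ := Nat.exists_eq_add_of_le h
  induction k with
  | zero => intro _ _ _ _; rfl
  | succ k hk =>
    intro p q hpq hp
    rw [hk (by lia) p q hpq hp, ← hφ (k₁ + k) (sequence φ x₀ (k₁ + k)) p q hpq (by lia)]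
    rfl

def limitSequence (p₀ : ℤ) : Cochain K L d :=
  Cochain.mk (fun p q hpq => (sequence φ x₀ (p₀ - p).toNat).1.v p q hpq)

lemma limitSequence_eqFrom {p₀ : ℤ}
    (hφ : ∀ (k : ℕ) (x : X k), (φ k x).val.EqFrom x.val (p₀ - k)) (k : ℕ) :
    (limitSequence φ x₀ p₀).EqFrom (sequence φ x₀ k).1 (p₀ - k) := by
  intro p q hpq hp
  exact sequence_eqFrom φ x₀ hφ _ _ (by lia) _ _ _ (by lia)

end InductionDown

end Cochain

variable {C : Type*} [Category* C] [Abelian C] {K L : CochainComplex C ℤ}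

lemma exists_δ_add_single_eqFrom {m n : ℤ} (hmn : m + 1 = n) (z : Cocycle K L n)
    (α : Cochain K L m) (p p' : ℤ) (hp : p + 1 = p') (hL : L.ExactAt (p + n))
    [Projective (K.X p)] (hα : (δ m n α).EqFrom z.1 p') :
    ∃ h : K.X p ⟶ L.X (p + m), (δ m n (α + Cochain.single h m)).EqFrom z.1 p := by
  set w := z.1 - δ m n α
  have hw : δ n (n + 1) w = 0 := by simp [w, δ_δ]
  have hw' : w.v p' (p + n + 1) (by lia) = 0 := by
    rw [Cochain.sub_v, hα p' _ _ le_rfl, sub_self]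
  have hu : w.v p (p + n) rfl ≫ L.d (p + n) (p + n + 1) = 0 := by
    have := Cochain.congr_v hw p (p + n + 1) (by lia)
    rwa [δ_v n (n + 1) rfl w p _ _ (p + n) p' (by lia) hp, hw', comp_zero, smul_zero,
      add_zero] at this
  have hS := (L.exactAt_iff' (p + m) (p + n) (p + n + 1) (by simp; lia) (by simp)).1 hL
  obtain ⟨h, hh⟩ : ∃ h : K.X p ⟶ L.X (p + m), h ≫ L.d (p + m) (p + n) = w.v p (p + n) rfl :=
    ⟨hS.liftFromProjective _ hu, hS.liftFromProjective_comp _ hu⟩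
  refine ⟨h, fun p'' q hpq hp'' => ?_⟩
  rw [δ_add, Cochain.add_v,
    δ_v m n hmn (Cochain.single h m) p'' q hpq (p'' + m) (p'' + 1) (by lia) rfl,
    Cochain.single_v_eq_zero _ _ (p'' + 1) _ _ (by lia), comp_zero, smul_zero, add_zero]
  obtain rfl | hlt := hp''.eq_or_lt
  · obtain rfl : q = p + n := by lia
    rw [Cochain.single_v, hh, Cochain.sub_v, add_sub_cancel]
  · rw [Cochain.single_v_eq_zero _ _ _ _ _ (by lia), zero_comp, add_zero, hα _ _ _ (by lia)]

lemma Cocycle.exists_eq_δ_of_isStrictlyLE [∀ p, Projective (K.X p)] (hL : L.Acyclic) (b : ℤ)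
    [L.IsStrictlyLE b] {m n : ℤ} (hmn : m + 1 = n) (z : Cocycle K L n) :
    ∃ α : Cochain K L m, δ m n α = z.1 := by
  let X (k : ℕ) : Set (Cochain K L m) := {α | (δ m n α).EqFrom z.1 (b - n + 1 - k)}
  let x₀ : X 0 := ⟨0, fun p q hpq hp =>
    (L.isZero_of_isStrictlyLE b q (by lia)).eq_of_tgt _ _⟩
  let φ (k : ℕ) (α : X k) : X (k + 1) :=
    ⟨_, (exists_δ_add_single_eqFrom hmn z α.1 (b - n + 1 - (k + 1 : ℕ)) (b - n + 1 - k)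
      (by lia) (hL _) α.2).choose_spec⟩
  have hφ (k : ℕ) (α : X k) : (φ k α).1.EqFrom α.1 (b - n + 1 - k) := fun p q hpq hp => by
    rw [Cochain.add_v, add_eq_left, Cochain.single_v_eq_zero _ _ _ _ _ (by lia)]
  refine ⟨Cochain.InductionDown.limitSequence φ x₀ (b - n + 1), ?_⟩
  ext p q hpq
  let k := (b - n + 1 - p).toNat
  rw [← (Cochain.InductionDown.sequence φ x₀ k).2 p q hpq (by lia),
    δ_v m n hmn _ p q hpq (p + m) (p + 1) (by lia) rfl,
    δ_v m n hmn _ p q hpq (p + m) (p + 1) (by lia) rfl,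
    Cochain.InductionDown.limitSequence_eqFrom φ x₀ hφ k p _ _ (by lia),
    Cochain.InductionDown.limitSequence_eqFrom φ x₀ hφ k (p + 1) _ _ (by lia)]

end CochainComplex.HomComplex

/-- If P is a complex of projectives and C is a bounded exact complex,
then Hom(P, C) is exact. -/
theorem stmt_1 (P C : Cplx A) (hP : ∀ n : ℤ, Projective (P.X n))
    (hC : Acyclic C) (hCb : Bdd C) : HomAcyclic P C := by
  obtain ⟨_, b, hb⟩ := hCb
  have : C.IsStrictlyLE b := (C.isStrictlyLE_iff b).2 fun i hi => hb i (Or.inr hi)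
  exact fun n z => z.exists_eq_δ_of_isStrictlyLE hC b (by lia)
end

section
/- If P is a complex of projective modules such that Hom(P, Q) is exact for every projective module Q, and F is a module of finite projective dimension, then Hom(P, F) is exact. -/
open CategoryTheory CategoryTheory.Limits CochainComplex.HomComplex

variable {A : Type} [Ring A]

/-- F admits a finite projective resolution. -/
def HasFiniteProjRes (F : ModuleCat A) : Prop :=
  ∃ (W : Cplx A) (f : W ⟶ sgl F),
    (∀ n : ℤ, Projective (W.X n)) ∧ Bdd W ∧ QuasiIso f

/-! ### Auxiliary definitions and lemmas -/

universe v

/-- The concrete lifting property for `Hom(P, Q)`: any map `P.X j ⟶ Q` killing the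
image of the differential factors through the next differential. -/
def LP (P : Cplx.{v} A) (Q : ModuleCat.{v} A) : Prop :=
  ∀ (i j k : ℤ), i + 1 = j → j + 1 = k → ∀ f : P.X j ⟶ Q, P.d i j ≫ f = 0 →
    ∃ g : P.X k ⟶ Q, P.d j k ≫ g = f

/-- The identification of the degree 0 part of `sgl Q` with `Q`. -/
noncomputable abbrev e0 (Q : ModuleCat.{v} A) : (sgl Q).X 0 ≅ Q :=
  HomologicalComplex.singleObjXSelf (ComplexShape.up ℤ) 0 Q

/-- The cochain `P ⟶ sgl Q` of degree `n` determined by a map `P.X m ⟶ Q`, `m + n = 0`. -/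
noncomputable def toSgl (P : Cplx.{v} A) (Q : ModuleCat.{v} A) (n m : ℤ) (hm : m + n = 0)
    (f : P.X m ⟶ Q) : Cochain P (sgl Q) n :=
  Cochain.mk (fun p q hpq => if h : q = 0 then
    eqToHom (congrArg P.X (show p = m by omega)) ≫ f ≫ (e0 Q).inv ≫
      eqToHom (congrArg (sgl Q).X h.symm) else 0)

lemma toSgl_v_self (P : Cplx.{v} A) (Q : ModuleCat.{v} A) (n m : ℤ) (hm : m + n = 0)
    (f : P.X m ⟶ Q) (hpq : m + n = 0) :
    (toSgl P Q n m hm f).v m 0 hpq = f ≫ (e0 Q).inv := by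
  simp [toSgl]

lemma toSgl_v_ne (P : Cplx.{v} A) (Q : ModuleCat.{v} A) (n m : ℤ) (hm : m + n = 0)
    (f : P.X m ⟶ Q) (p q : ℤ) (hpq : p + n = q) (hq : q ≠ 0) :
    (toSgl P Q n m hm f).v p q hpq = 0 := by
  simp [toSgl, hq]

/-- From the abstract acyclicity of the Hom complex to the concrete lifting property. -/
lemma LP_of_homAcyclic (P : Cplx.{v} A) (Q : ModuleCat.{v} A) (h : HomAcyclic P (sgl Q)) :
    LP P Q := by
  intro i j k hij hjk f hf
  obtain rfl : i = j - 1 := by omega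
  obtain rfl : k = j + 1 := by omega
  -- build the cocycle associated to `f`
  have hδ : δ (-j) (-j + 1) (toSgl P Q (-j) j (by omega) f) = 0 := by
    refine Cochain.ext _ _ (fun p q hpq => ?_)
    by_cases hq : q = 0
    · subst hq
      obtain rfl : p = j - 1 := by omega
      rw [δ_v (-j) (-j+1) rfl _ (j-1) 0 hpq (-1) j (by omega) (by omega)]
      rw [toSgl_v_ne P Q (-j) j (by omega) f (j-1) (-1) (by omega) (by omega),
        toSgl_v_self]
      simp only [Cochain.zero_v, zero_comp, smul_zero, zero_add]
      rw [← Category.assoc, hf]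
      simp
    · have : IsZero ((sgl Q).X q) :=
        HomologicalComplex.isZero_single_obj_X (ComplexShape.up ℤ) 0 Q q hq
      exact this.eq_of_tgt _ _
  obtain ⟨y, hy⟩ := h (-j) (Cocycle.mk (toSgl P Q (-j) j (by omega) f) (-j+1) rfl hδ)
  -- extract the lift from `y`
  have := Cochain.congr_v hy j 0 (by omega)
  rw [δ_v (-j - 1) (-j) (by omega) y j 0 (by omega) (-1) (j+1) (by omega) (by omega)] at this
  simp only [Cocycle.mk_coe] at this
  rw [toSgl_v_self P Q (-j) j (by omega) f (by omega)] at this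
  have hd : (sgl Q).d (-1) 0 = 0 := HomologicalComplex.single_obj_d _ _ _ _ _
  rw [hd, comp_zero, zero_add] at this
  refine ⟨(-j).negOnePow • (y.v (j+1) 0 (by omega) ≫ (e0 Q).hom), ?_⟩
  have : ((-j).negOnePow • (P.d j (j+1) ≫ y.v (j+1) 0 (by omega))) ≫ (e0 Q).hom
      = (f ≫ (e0 Q).inv) ≫ (e0 Q).hom := by rw [← this]
  simpa using this

/-- From the concrete lifting property to the abstract acyclicity of the Hom complex. -/
lemma homAcyclic_of_LP (P : Cplx.{v} A) (Q : ModuleCat.{v} A) (h : LP P Q) :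
    HomAcyclic P (sgl Q) := by
  intro n z
  -- the cocycle `z` is concentrated in the component `P.X (-n) ⟶ (sgl Q).X 0`
  have hz : P.d (-n - 1) (-n) ≫ z.1.v (-n) 0 (by omega) = 0 := by
    have hδ := Cocycle.δ_eq_zero z (n + 1)
    have := Cochain.congr_v hδ (-n - 1) 0 (by omega)
    rw [δ_v n (n+1) rfl z.1 (-n-1) 0 (by omega) (-1) (-n) (by omega) (by omega)] at this
    have hd : (sgl Q).d (-1) 0 = 0 := HomologicalComplex.single_obj_d _ _ _ _ _
    rw [hd, comp_zero, zero_add, Cochain.zero_v] at this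
    have := congrArg (fun w => (n+1).negOnePow • w) this
    simpa [smul_smul, Int.units_mul_self] using this
  have hf : P.d (-n - 1) (-n) ≫ (z.1.v (-n) 0 (by omega) ≫ (e0 Q).hom) = 0 := by
    rw [← Category.assoc, hz, zero_comp]
  obtain ⟨g, hg⟩ := h (-n - 1) (-n) (-n + 1) (by omega) (by omega) _ hf
  refine ⟨toSgl P Q (n - 1) (-n + 1) (by omega) (n.negOnePow • g), ?_⟩
  refine Cochain.ext _ _ (fun p q hpq => ?_)
  by_cases hq : q = 0
  · subst hq
    obtain rfl : p = -n := by omega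
    rw [δ_v (n-1) n (by omega) _ (-n) 0 (by omega) (-1) (-n + 1) (by omega) (by omega)]
    rw [toSgl_v_ne P Q (n-1) (-n+1) (by omega) _ (-n) (-1) (by omega) (by omega),
      toSgl_v_self P Q (n-1) (-n+1) (by omega) _ (by omega)]
    have hd : (sgl Q).d (-1) 0 = 0 := HomologicalComplex.single_obj_d _ _ _ _ _
    rw [hd, comp_zero, zero_add]
    have : P.d (-n) (-n + 1) ≫ (n.negOnePow • g) ≫ (e0 Q).inv
        = n.negOnePow • (P.d (-n) (-n+1) ≫ g) ≫ (e0 Q).inv := by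
      simp
    rw [this, hg, smul_smul, Int.units_mul_self, one_smul, Category.assoc]
    simp
  · have hzero : IsZero ((sgl Q).X q) :=
      HomologicalComplex.isZero_single_obj_X (ComplexShape.up ℤ) 0 Q q hq
    exact hzero.eq_of_tgt _ _

/-- Finite projective dimension, witnessed by a chain of syzygies. -/
def FPD : ℕ → ModuleCat.{v} A → Prop
  | 0, F => Projective F
  | n+1, F => ∃ (Q : ModuleCat.{v} A) (π : Q ⟶ F), Projective Q ∧ Epi π ∧ FPD n (kernel π)

lemma FPD_of_iso : ∀ (n : ℕ) {F G : ModuleCat.{v} A} (_ : F ≅ G), FPD n F → FPD n G := by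
  intro n
  induction n with
  | zero => exact fun e h => Projective.of_iso e h
  | succ n ih =>
    rintro F G e ⟨Q, π, hQ, hepi, hk⟩
    refine ⟨Q, π ≫ e.hom, hQ, epi_comp _ _, ih (kernelCompMono π e.hom).symm hk⟩

/-- The heart of the argument: the lifting property passes from projectives to
modules of finite projective dimension. -/
lemma LP_of_FPD (P : Cplx.{v} A) (hP : ∀ n : ℤ, Projective (P.X n))
    (hLP : ∀ Q : ModuleCat.{v} A, Projective Q → LP P Q) :
    ∀ (n : ℕ) (F : ModuleCat.{v} A), FPD n F → LP P F := by
  intro n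
  induction n with
  | zero => exact fun F hF => hLP F hF
  | succ n ih =>
    rintro F ⟨Q, π, hQ, hepi, hk⟩ i j k hij hjk f hf
    obtain rfl : i = j - 1 := by omega
    obtain rfl : k = j + 1 := by omega
    haveI := hP j
    -- lift `f` through the epi `π`
    let g₀ : P.X j ⟶ Q := Projective.factorThru f π
    have hg₀ : g₀ ≫ π = f := Projective.factorThru_comp f π
    -- the boundary of `g₀` lands in the kernel
    let c : P.X (j-1) ⟶ kernel π := kernel.lift π (P.d (j-1) j ≫ g₀)
      (by rw [Category.assoc, hg₀, hf])
    have hc : P.d (j-1-1) (j-1) ≫ c = 0 := by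
      rw [← cancel_mono (kernel.ι π)]
      simp [c, reassoc_of% (P.d_comp_d (j-1-1) (j-1) j)]
    -- kill it using the induction hypothesis for the kernel
    obtain ⟨h', hh'⟩ := ih (kernel π) hk (j-1-1) (j-1) j (by omega) (by omega) c hc
    -- now `g₀ - h' ≫ ι` is a cocycle into the projective `Q`
    have hco : P.d (j-1) j ≫ (g₀ - h' ≫ kernel.ι π) = 0 := by
      rw [Preadditive.comp_sub, ← Category.assoc, hh']
      simp [c]
    obtain ⟨y, hy⟩ := hLP Q hQ (j-1) j (j+1) (by omega) rfl _ hco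
    refine ⟨y ≫ π, ?_⟩
    rw [← Category.assoc, hy]
    simp [hg₀]

lemma projective_of_isZero {X : ModuleCat.{v} A} (h : IsZero X) : Projective X :=
  ⟨fun {E B} f e _ => ⟨0, by rw [zero_comp]; exact (h.eq_of_src _ _)⟩⟩

lemma projective_of_retract {X Y : ModuleCat.{v} A} (i : X ⟶ Y) (r : Y ⟶ X)
    (hir : i ≫ r = 𝟙 X) (hY : Projective Y) : Projective X := by
  constructor
  intro E B f e he
  obtain ⟨h', hh'⟩ := hY.factors (r ≫ f) e
  exact ⟨i ≫ h', by rw [Category.assoc, hh', ← Category.assoc, hir, Category.id_comp]⟩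

/-- The kernel of `kernel.lift v u h` is isomorphic to the kernel of `u`. -/
noncomputable def kerLiftIso {X Y Z : ModuleCat.{v} A} (u : X ⟶ Y) (v : Y ⟶ Z)
    (h : u ≫ v = 0) : kernel (kernel.lift v u h) ≅ kernel u :=
  (kernelCompMono (kernel.lift v u h) (kernel.ι v)).symm ≪≫
    kernelIsoOfEq (kernel.lift_ι v u h)

/-- If `W` is exact at `j`, the corestriction of `W.d i j` to `kernel (W.d j k)` is epi. -/
lemma epi_lift_of_exactAt (W : Cplx.{v} A) {i j k : ℤ} (hij : i + 1 = j) (hjk : j + 1 = k)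
    (h : W.ExactAt j) :
    Epi (kernel.lift (W.d j k) (W.d i j) (W.d_comp_d i j k)) := by
  rw [W.exactAt_iff' i j k (by rw [CochainComplex.prev]; omega)
    (by rw [CochainComplex.next]; omega)] at h
  exact (ShortComplex.exact_iff_epi_kernel_lift _).mp h

/-- Downward induction: the cycles of a right-bounded, eventually exact complex of
projectives are projective. -/
lemma projective_cycles (W : Cplx.{v} A) (hW : ∀ n : ℤ, Projective (W.X n)) (b : ℤ)
    (hb : ∀ n : ℤ, b < n → IsZero (W.X n))
    (hex : ∀ n : ℤ, 0 < n → W.ExactAt n) :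
    ∀ j j' : ℤ, 0 ≤ j → j + 1 = j' → Projective (kernel (W.d j j')) := by
  suffices h : ∀ (N : ℕ) (j : ℤ), 0 ≤ j → b + 1 ≤ j + N → Projective (kernel (W.d j (j+1))) by
    intro j j' hj hj'
    obtain rfl : j' = j + 1 := by omega
    refine h (b + 1 - j).toNat j hj ?_
    have := Int.self_le_toNat (b + 1 - j)
    omega
  intro N
  induction N with
  | zero =>
    intro j hj hbj
    exact projective_of_isZero (IsZero.of_mono (kernel.ι _) (hb j (by omega)))
  | succ N ih =>
    intro j hj hbj
    haveI hproj : Projective (kernel (W.d (j+1) (j+1+1))) := ih (j+1) (by omega) (by omega)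
    have e : W.X j ⟶ kernel (W.d (j+1) (j+1+1)) :=
      kernel.lift _ (W.d j (j+1)) (W.d_comp_d j (j+1) (j+1+1))
    haveI hepi : Epi (kernel.lift (W.d (j+1) (j+1+1)) (W.d j (j+1))
        (W.d_comp_d j (j+1) (j+1+1))) :=
      epi_lift_of_exactAt W rfl rfl (hex (j+1) (by omega))
    set e := kernel.lift (W.d (j+1) (j+1+1)) (W.d j (j+1)) (W.d_comp_d j (j+1) (j+1+1)) with he
    let s : kernel (W.d (j+1) (j+1+1)) ⟶ W.X j := Projective.factorThru (𝟙 _) e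
    have hs : s ≫ e = 𝟙 _ := Projective.factorThru_comp _ _
    have ht : (𝟙 (W.X j) - e ≫ s) ≫ W.d j (j+1) = 0 := by
      have hd : W.d j (j+1) = e ≫ kernel.ι _ := (kernel.lift_ι _ _ _).symm
      rw [Preadditive.sub_comp, Category.id_comp, hd, Category.assoc, ← Category.assoc s,
        hs, Category.id_comp]
      simp
    let r : W.X j ⟶ kernel (W.d j (j+1)) := kernel.lift _ _ ht
    refine projective_of_retract (kernel.ι _) r ?_ (hW j)
    rw [← cancel_mono (kernel.ι (W.d j (j+1)))]
    have hie : kernel.ι (W.d j (j+1)) ≫ e = 0 := by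
      rw [← cancel_mono (kernel.ι (W.d (j+1) (j+1+1)))]
      simp [he]
    simp [r, Preadditive.comp_sub, reassoc_of% hie]

/-- Upward induction: the negative-degree cycles of a left-bounded complex of projectives,
exact in negative degrees, have finite projective dimension. -/
lemma FPD_cycles_neg (W : Cplx.{v} A) (hW : ∀ n : ℤ, Projective (W.X n)) (a : ℤ)
    (ha : ∀ n : ℤ, n < a → IsZero (W.X n))
    (hex : ∀ n : ℤ, n < 0 → W.ExactAt n) :
    ∀ (N : ℕ) (j j' : ℤ), j ≤ -1 → j + 1 = j' → j ≤ a - 1 + N →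
      FPD N (kernel (W.d j j')) := by
  intro N
  induction N with
  | zero =>
    intro j j' hj hj' hja
    exact projective_of_isZero (IsZero.of_mono (kernel.ι _) (ha j (by omega)))
  | succ N ih =>
    intro j j' hj hj' hja
    obtain rfl : j' = j + 1 := by omega
    refine ⟨W.X (j-1), kernel.lift (W.d j (j+1)) (W.d (j-1) j) (W.d_comp_d (j-1) j (j+1)),
      hW (j-1), epi_lift_of_exactAt W (by omega) rfl (hex j (by omega)), ?_⟩
    refine FPD_of_iso N (kerLiftIso (W.d (j-1) j) (W.d j (j+1)) _).symm ?_
    exact ih (j-1) j (by omega) (by omega) (by omega)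

/-- Extraction of a syzygy chain from a finite projective resolution. -/
lemma exists_FPD (F : ModuleCat.{v} A) (hF : HasFiniteProjRes F) : ∃ n, FPD n F := by
  obtain ⟨W, f, hW, ⟨a, b, hab⟩, hq⟩ := hF
  haveI := hq
  have hex : ∀ n : ℤ, n ≠ 0 → W.ExactAt n := by
    intro n hn
    have h1 : (sgl F).ExactAt n :=
      HomologicalComplex.exactAt_single_obj (ComplexShape.up ℤ) 0 F n hn
    rw [HomologicalComplex.exactAt_iff_isZero_homology] at h1 ⊢
    haveI : QuasiIsoAt f n := inferInstance
    haveI : IsIso (HomologicalComplex.homologyMap f n) :=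
      (quasiIsoAt_iff_isIso_homologyMap f n).mp inferInstance
    exact IsZero.of_iso h1 (asIso (HomologicalComplex.homologyMap f n))
  -- the kernel of `d 0 1` is projective
  have hproj0 : Projective (kernel (W.d 0 1)) :=
    projective_cycles W hW b (fun n hn => hab n (Or.inr hn))
      (fun n hn => hex n (by omega)) 0 1 le_rfl (by omega)
  -- identify `kernel (d 0 1)` with the cycles at 0
  have h01 : (ComplexShape.up ℤ).next 0 = 1 := by rw [CochainComplex.next]; omega
  let isoK0' := IsLimit.conePointUniqueUpToIso (W.cyclesIsKernel 0 1 h01)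
    (kernelIsKernel (W.d 0 1))
  let isoK0 : W.cycles 0 ≅ kernel (W.d 0 1) := ⟨isoK0'.hom, isoK0'.inv, isoK0'.hom_inv_id, isoK0'.inv_hom_id⟩
  have hko : isoK0.hom ≫ kernel.ι (W.d 0 1) = W.iCycles 0 := by
    simpa using IsLimit.conePointUniqueUpToIso_hom_comp (W.cyclesIsKernel 0 1 h01)
      (kernelIsKernel (W.d 0 1)) WalkingParallelPair.zero
  -- the augmentation map onto `F`
  let iso1 : (sgl F).homology 0 ≅ F :=
    HomologicalComplex.singleObjHomologySelfIso (ComplexShape.up ℤ) 0 F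
  haveI : QuasiIsoAt f 0 := inferInstance
  haveI : IsIso (HomologicalComplex.homologyMap f 0) :=
    (quasiIsoAt_iff_isIso_homologyMap f 0).mp inferInstance
  let τ3 : W.homology 0 ⟶ F := HomologicalComplex.homologyMap f 0 ≫ iso1.hom
  haveI : IsIso τ3 := by dsimp only [τ3]; infer_instance
  let p : kernel (W.d 0 1) ⟶ F := isoK0.inv ≫ W.homologyπ 0 ≫ τ3
  haveI hepi_p : Epi p := by dsimp only [p]; infer_instance
  -- the corestricted differential `W.X (-1) ⟶ kernel (d 0 1)`
  let e₀ : W.X (-1) ⟶ kernel (W.d 0 1) :=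
    kernel.lift (W.d 0 1) (W.d (-1) 0) (W.d_comp_d (-1) 0 1)
  have htoc : W.toCycles (-1) 0 ≫ isoK0.hom = e₀ := by
    rw [← cancel_mono (kernel.ι (W.d 0 1)), Category.assoc, hko]
    simp [e₀]
  have htoc' : e₀ ≫ isoK0.inv = W.toCycles (-1) 0 := by
    rw [← htoc]; simp
  have zero2 : e₀ ≫ p = 0 := by
    dsimp only [p]
    rw [← Category.assoc, htoc', ← Category.assoc, W.toCycles_comp_homologyπ, zero_comp]
  -- exactness of `W.X (-1) ⟶ kernel (d 0 1) ⟶ F`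
  let S1 : ShortComplex (ModuleCat.{v} A) :=
    ShortComplex.mk (W.toCycles (-1) 0) (W.homologyπ 0) (W.toCycles_comp_homologyπ (-1) 0)
  let S2 : ShortComplex (ModuleCat.{v} A) := ShortComplex.mk e₀ p zero2
  have hS1 : S1.Exact := ShortComplex.exact_of_g_is_cokernel _
    (W.homologyIsCokernel (-1) 0 (by rw [CochainComplex.prev]; omega))
  have hS2 : S2.Exact := by
    refine ShortComplex.exact_of_iso (S₁ := S1) (S₂ := S2)
      (ShortComplex.isoMk (Iso.refl _) isoK0 (asIso τ3) ?_ ?_) hS1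
    · simpa using htoc.symm
    · dsimp [S1, S2, p]; simp
  haveI hepic : Epi (kernel.lift p e₀ zero2) :=
    (ShortComplex.exact_iff_epi_kernel_lift S2).mp hS2
  -- assemble the syzygy chain
  obtain ⟨N, hN⟩ : ∃ N : ℕ, FPD N (kernel (W.d (-1) 0)) := by
    refine ⟨(-a).toNat, FPD_cycles_neg W hW a (fun n hn => hab n (Or.inl hn))
      (fun n hn => hex n (by omega)) (-a).toNat (-1) 0 le_rfl (by omega) ?_⟩
    have := Int.self_le_toNat (-a)
    omega
  refine ⟨N + 2, kernel (W.d 0 1), p, hproj0, hepi_p, W.X (-1), kernel.lift p e₀ zero2,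
    hW (-1), hepic, ?_⟩
  refine FPD_of_iso N ?_ hN
  exact (kerLiftIso e₀ p zero2 ≪≫ kerLiftIso (W.d (-1) 0) (W.d 0 1) _).symm

/-- If Hom(P, Q) is exact for all projective Q and F has finite projective dimension,
then Hom(P, F) is exact. -/
theorem stmt_2 (P : Cplx A) (hP : ∀ n : ℤ, Projective (P.X n))
    (hPQ : ∀ Q : ModuleCat A, Projective Q → HomAcyclic P (sgl Q))
    (F : ModuleCat A) (hF : HasFiniteProjRes F) : HomAcyclic P (sgl F) := by
  obtain ⟨n, hFPD⟩ := exists_FPD (A := A) F hF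
  have h1 : ∀ Q : ModuleCat A, Projective Q → LP P Q :=
    fun Q hQ => LP_of_homAcyclic P Q (hPQ Q hQ)
  have h2 : LP P F := LP_of_FPD P hP h1 n F hFPD
  exact homAcyclic_of_LP P F h2
end
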